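/- There is a constant C depending only on g and k with the following property. Let H be a k-local Hamiltonian with interaction strength g on the N-spin system, with ground energy 0, unique normalized ground state |Ω⟩, and spectral gap δE > 0. Then for every subset of spins L with δE ≤ g|L| and every additive operator A_L on L, the spectral gap and the ground-state fluctuation satisfy the trade-off δE · (⟨Ω|A_L²|Ω⟩ − ⟨Ω|A_L|Ω⟩²) ≤ C·|L|. -/

import Mathlib

/-!
Put `φ = A Ω - ⟨Ω, A Ω⟩ Ω`: it is orthogonal to `Ω` and `‖φ‖²` is the variance. Since `H Ω = 0`,
the gap gives `δE ‖φ‖² ≤ ⟨φ, H φ⟩ = ⟨A Ω, H A Ω⟩ = ½ ⟨Ω, [A, [H, A]] Ω⟩ ≤ ½ ‖[A, [H, A]]‖`.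
Writing `H = ∑ h_X`, only the spins of `L ∩ X` survive in `[A, [h_X, A]]`, whose norm is therefore
at most `4 k |L ∩ X| ‖h_X‖`; exchanging the order of summation, `∑_X |L ∩ X| ‖h_X‖ ≤ g |L|`.
Altogether `δE · Var ≤ 2 k g |L|`.
-/

noncomputable section

open scoped ComplexConjugate

/-- The Hilbert space of `N` spins, each of local dimension `d`:
the `N`-fold tensor product `⊗ ℂ^d`, realized as the space with orthonormal
basis indexed by configurations `Fin N → Fin d`. -/
abbrev SpinSpace (N d : ℕ) : Type := EuclideanSpace ℂ (Fin N → Fin d)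

/-- Operators on the spin system. -/
abbrev SpinOp (N d : ℕ) : Type := SpinSpace N d →L[ℂ] SpinSpace N d

variable {N d : ℕ}

/-- The standard (computational) basis vector labelled by a configuration. -/
def basisVec (f : Fin N → Fin d) : SpinSpace N d := EuclideanSpace.single f 1

/-- The matrix entry `⟨f| A |g⟩` of an operator in the computational basis. -/
def matEntry (A : SpinOp N d) (f g : Fin N → Fin d) : ℂ :=
  inner ℂ (basisVec f) (A (basisVec g))

/-- `A` is supported on the subset `X` of spins: under the tensor factorization
`ℋ ≅ ℋ_X ⊗ ℋ_{Xᶜ}` it has the form `o ⊗ I`.  Concretely: matrix entries vanish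
unless the two configurations agree outside `X`, and entries depend only on the
restrictions of the configurations to `X`. -/
def SupportedOn (X : Finset (Fin N)) (A : SpinOp N d) : Prop :=
  (∀ f g : Fin N → Fin d, (∃ i, i ∉ X ∧ f i ≠ g i) → matEntry A f g = 0) ∧
  (∀ f g f' g' : Fin N → Fin d,
      (∀ i ∈ X, f i = f' i) → (∀ i ∈ X, g i = g' i) →
      (∀ i, i ∉ X → f i = g i) → (∀ i, i ∉ X → f' i = g' i) →
      matEntry A f g = matEntry A f' g')

/-- A `q`-local operator: a sum of operators, each supported on at most `q` spins. -/
def IsLocalOp (q : ℕ) (A : SpinOp N d) : Prop :=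
  ∃ (n : ℕ) (X : Fin n → Finset (Fin N)) (o : Fin n → SpinOp N d),
    (∀ t, (X t).card ≤ q ∧ SupportedOn (X t) (o t)) ∧ A = ∑ t, o t

/-- A `k`-local Hamiltonian with interaction strength `g`: a sum of Hermitian
terms, each supported on at most `k` spins, such that for every spin the total
norm of the terms acting on it is at most `g`. -/
def IsKLocalHamiltonian (k : ℕ) (g : ℝ) (H : SpinOp N d) : Prop :=
  ∃ (n : ℕ) (X : Fin n → Finset (Fin N)) (h : Fin n → SpinOp N d),
    (∀ t, (X t).card ≤ k ∧ SupportedOn (X t) (h t) ∧ IsSelfAdjoint (h t)) ∧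
    (∀ i : Fin N, ∑ t ∈ Finset.univ.filter (fun t => i ∈ X t), ‖h t‖ ≤ g) ∧
    H = ∑ t, h t

/-- An additive operator `A = ∑_{i ∈ L} a_i`, each `a_i` Hermitian, supported on
the single spin `i`, with `‖a_i‖ ≤ 1`. -/
def IsAdditiveOn (L : Finset (Fin N)) (a : Fin N → SpinOp N d) (A : SpinOp N d) : Prop :=
  (∀ i ∈ L, SupportedOn {i} (a i) ∧ IsSelfAdjoint (a i) ∧ ‖a i‖ ≤ 1) ∧
  A = ∑ i ∈ L, a i

/-- The span of all eigenvectors of `A` whose (real) eigenvalue satisfies `P`. -/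
def eigSpan (A : SpinOp N d) (P : ℝ → Prop) : Submodule ℂ (SpinSpace N d) :=
  ⨆ (a : ℝ) (_ : P a), Module.End.eigenspace (A : SpinSpace N d →ₗ[ℂ] SpinSpace N d) (a : ℂ)

/-- Spectral projector of `A` onto the eigenvalues satisfying `P` (the orthogonal
projection onto the span of the corresponding eigenvectors). -/
def specProj (A : SpinOp N d) (P : ℝ → Prop) : SpinOp N d :=
  (eigSpan A P).subtypeL.comp ((eigSpan A P).orthogonalProjection)

/-- `m` is a median of `A` in the state `ψ`. -/
def IsMedian (A : SpinOp N d) (ψ : SpinSpace N d) (m : ℝ) : Prop :=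
  (1:ℝ)/2 ≤ (inner ℂ ψ ((specProj A (fun a => a ≤ m)) ψ) : ℂ).re ∧
  (1:ℝ)/2 ≤ (inner ℂ ψ ((specProj A (fun a => m ≤ a)) ψ) : ℂ).re

/-- The state `ψ` satisfies the local-reversibility bound with function `f`. -/
def SatisfiesLR (f : ℝ → ℝ) (ψ : SpinSpace N d) : Prop :=
  ∀ (L : Finset (Fin N)) (Γ : SpinOp N d), SupportedOn L Γ →
    (inner ℂ ψ (Γ ψ) : ℂ) ≠ 0 →
    ∀ q : ℕ, 0 < q →
      ∃ R : SpinOp N d, IsLocalOp q R ∧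
        ‖R (Γ ψ) - ψ‖ ≤ ‖Γ‖ / ‖(inner ℂ ψ (Γ ψ) : ℂ)‖ * f ((q : ℝ) / Real.sqrt (L.card))

/-- `H` has ground energy `0` with unique normalized ground state `Ω` and spectral
gap (at least) `δE`: `Ω` is a null state, every null state is proportional to `Ω`,
and on the orthogonal complement of `Ω` the energy is at least `δE`. -/
def IsGappedGround (H : SpinOp N d) (Ω : SpinSpace N d) (δE : ℝ) : Prop :=
  ‖Ω‖ = 1 ∧ H Ω = 0 ∧
  (∀ φ : SpinSpace N d, H φ = 0 → ∃ c : ℂ, φ = c • Ω) ∧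
  (∀ φ : SpinSpace N d, (inner ℂ Ω φ : ℂ) = 0 → δE * ‖φ‖ ^ 2 ≤ (inner ℂ φ (H φ) : ℂ).re)


open Finset
open scoped InnerProductSpace

lemma basisVec_eq (f : Fin N → Fin d) :
    basisVec f = EuclideanSpace.basisFun (Fin N → Fin d) ℂ f := by
  rw [EuclideanSpace.basisFun_apply]; rfl

lemma matEntry_eq_apply (A : SpinOp N d) (f g : Fin N → Fin d) :
    matEntry A f g = A (basisVec g) f := by
  simp [matEntry, basisVec, EuclideanSpace.inner_single_left]

lemma ext_matEntry {A B : SpinOp N d} (h : ∀ f g, matEntry A f g = matEntry B f g) : A = B := by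
  apply ContinuousLinearMap.coe_injective
  refine (EuclideanSpace.basisFun (Fin N → Fin d) ℂ).toBasis.ext fun g => ?_
  ext f
  simpa [matEntry_eq_apply, basisVec_eq] using h f g

lemma matEntry_mul (A B : SpinOp N d) (f g : Fin N → Fin d) :
    matEntry (A * B) f g = ∑ m, matEntry A f m * matEntry B m g := by
  conv_lhs => rw [matEntry, mul_apply_eq_comp,
    ← (EuclideanSpace.basisFun (Fin N → Fin d) ℂ).sum_repr' (B (basisVec g))]
  simp only [map_sum, map_smul, inner_sum, inner_smul_right, ← basisVec_eq]
  exact Finset.sum_congr rfl fun m _ => mul_comm _ _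

/-- The only configuration through which a product `A * B` of operators on disjoint sets of
spins can pass from `g` to `f`: it agrees with `g` on `X` and with `f` elsewhere. -/
lemma SupportedOn.matEntry_mul_of_disjoint {X Y : Finset (Fin N)} {A B : SpinOp N d}
    (hXY : Disjoint X Y) (hA : SupportedOn X A) (hB : SupportedOn Y B) (f g : Fin N → Fin d) :
    matEntry (A * B) f g = matEntry A f (X.piecewise g f) * matEntry B (X.piecewise g f) g := by
  rw [matEntry_mul, Finset.sum_eq_single_of_mem _ (mem_univ _)]
  intro m _ hm
  obtain ⟨i, hi⟩ := Function.ne_iff.mp hm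
  by_cases hiX : i ∈ X
  · rw [X.piecewise_eq_of_mem _ _ hiX] at hi
    rw [hB.1 m g ⟨i, disjoint_left.mp hXY hiX, hi⟩, mul_zero]
  · rw [X.piecewise_eq_of_notMem _ _ hiX] at hi
    rw [hA.1 f m ⟨i, hiX, Ne.symm hi⟩, zero_mul]

lemma SupportedOn.commute_of_disjoint {X Y : Finset (Fin N)} {A B : SpinOp N d}
    (hXY : Disjoint X Y) (hA : SupportedOn X A) (hB : SupportedOn Y B) : Commute A B := by
  refine ext_matEntry fun f g => ?_
  rw [hA.matEntry_mul_of_disjoint hXY hB, hB.matEntry_mul_of_disjoint hXY.symm hA]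
  set m := X.piecewise g f
  set m' := Y.piecewise g f
  have hYX : ∀ i ∈ Y, i ∉ X := fun i hY hX => disjoint_left.mp hXY hX hY
  by_cases hfg : ∀ i, i ∉ X → i ∉ Y → f i = g i
  · have hA' : matEntry A f m = matEntry A m' g := by
      refine hA.2 _ _ _ _ (fun i hi => ?_) (fun i hi => ?_) (fun i hi => ?_) (fun i hi => ?_)
      · simp [m', disjoint_left.mp hXY hi]
      · simp [m, hi]
      · simp [m, hi]
      · by_cases hiY : i ∈ Y
        · simp [m', hiY]
        · simp [m', hiY, hfg i hi hiY]
    have hB' : matEntry B m g = matEntry B f m' := by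
      refine hB.2 _ _ _ _ (fun i hi => ?_) (fun i hi => ?_) (fun i hi => ?_) (fun i hi => ?_)
      · simp [m, hYX i hi]
      · simp [m', hi]
      · by_cases hiX : i ∈ X
        · simp [m, hiX]
        · simp [m, hiX, hfg i hiX hi]
      · simp [m', hi]
    rw [hA', hB', mul_comm]
  · push Not at hfg
    obtain ⟨i, hiX, hiY, hne⟩ := hfg
    rw [hB.1 m g ⟨i, hiY, by simpa [m, hiX] using hne⟩,
      hA.1 m' g ⟨i, hiX, by simpa [m', hiY] using hne⟩, mul_zero, mul_zero]

lemma lie_lie_add_of_lie_eq_zero {L : Type*} [LieRing L] {b c h : L} (hch : ⁅c, h⁆ = 0)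
    (hcb : ⁅c, b⁆ = 0) : ⁅b + c, ⁅h, b + c⁆⁆ = ⁅b, ⁅h, b⁆⁆ := by
  have hhc : ⁅h, c⁆ = 0 := by rw [← lie_skew, hch, neg_zero]
  have hc : ⁅c, ⁅h, b⁆⁆ = 0 := by rw [leibniz_lie, hch, hcb, zero_lie, lie_zero, add_zero]
  rw [lie_add, hhc, add_zero, add_lie, hc, add_zero]

lemma norm_lie_le {R : Type*} [NonUnitalNormedRing R] (x y : R) : ‖⁅x, y⁆‖ ≤ 2 * ‖x‖ * ‖y‖ := by
  rw [Ring.lie_def]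
  linarith [norm_sub_le (x * y) (y * x), norm_mul_le x y, norm_mul_le y x]

lemma norm_lie_lie_le {R : Type*} [NonUnitalNormedRing R] (x y : R) :
    ‖⁅x, ⁅y, x⁆⁆‖ ≤ 4 * ‖x‖ ^ 2 * ‖y‖ := by
  calc ‖⁅x, ⁅y, x⁆⁆‖ ≤ 2 * ‖x‖ * (2 * ‖y‖ * ‖x‖) := by
        grw [norm_lie_le, norm_lie_le]
    _ = 4 * ‖x‖ ^ 2 * ‖y‖ := by ring

lemma Finset.sum_card_inter_mul_le {ι α : Type*} [Fintype ι] [DecidableEq α] (X : ι → Finset α)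
    (w : ι → ℝ) (L : Finset α) {g : ℝ} (hw : ∀ i ∈ L, ∑ t with i ∈ X t, w t ≤ g) :
    ∑ t, #(L ∩ X t) * w t ≤ g * #L :=
  calc ∑ t, #(L ∩ X t) * w t = ∑ i ∈ L, ∑ t with i ∈ X t, w t := by
        simp_rw [sum_filter, sum_comm (s := L), sum_ite_mem, sum_const, nsmul_eq_mul]
    _ ≤ ∑ _i ∈ L, g := sum_le_sum hw
    _ = g * #L := by rw [sum_const, nsmul_eq_mul, mul_comm]

attribute [local instance 100] LieRing.ofAssociativeRing

lemma lie_lie_sum_eq_sum_inter {L X : Finset (Fin N)} {a : Fin N → SpinOp N d} {h : SpinOp N d}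
    (ha : ∀ i ∈ L, SupportedOn {i} (a i)) (hh : SupportedOn X h) :
    ⁅∑ i ∈ L, a i, ⁅h, ∑ i ∈ L, a i⁆⁆ = ⁅∑ i ∈ L ∩ X, a i, ⁅h, ∑ i ∈ L ∩ X, a i⁆⁆ := by
  rw [← sum_inter_add_sum_sdiff L X]
  refine lie_lie_add_of_lie_eq_zero ?_ ?_
  · rw [sum_lie]
    refine sum_eq_zero fun i hi => commute_iff_lie_eq.mp ?_
    obtain ⟨hiL, hiX⟩ := mem_sdiff.mp hi
    exact (ha i hiL).commute_of_disjoint (disjoint_singleton_left.mpr hiX) hh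
  · rw [sum_lie]
    refine sum_eq_zero fun i hi => ?_
    rw [lie_sum]
    refine sum_eq_zero fun j hj => ?_
    obtain ⟨hiL, hiX⟩ := mem_sdiff.mp hi
    obtain ⟨hjL, hjX⟩ := mem_inter.mp hj
    refine commute_iff_lie_eq.mp ((ha i hiL).commute_of_disjoint ?_ (ha j hjL))
    exact disjoint_singleton.mpr fun hij => hiX (hij ▸ hjX)

lemma IsKLocalHamiltonian.norm_lie_lie_le_of_isAdditiveOn {k : ℕ} {g : ℝ} {H A : SpinOp N d}
    {L : Finset (Fin N)} {a : Fin N → SpinOp N d}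
    (hH : IsKLocalHamiltonian k g H) (hA : IsAdditiveOn L a A) :
    ‖⁅A, ⁅H, A⁆⁆‖ ≤ 4 * k * (g * #L) := by
  obtain ⟨n, X, h, hloc, hstr, rfl⟩ := hH
  obtain ⟨ha, rfl⟩ := hA
  have hterm : ∀ t, ‖⁅∑ i ∈ L, a i, ⁅h t, ∑ i ∈ L, a i⁆⁆‖ ≤ 4 * k * (#(L ∩ X t) * ‖h t‖) := by
    intro t
    have hB : ‖∑ i ∈ L ∩ X t, a i‖ ≤ #(L ∩ X t) :=
      (norm_sum_le_of_le _ fun i hi => (ha i (mem_inter.mp hi).1).2.2).trans (by simp)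
    have hcard : (#(L ∩ X t) : ℝ) ≤ k :=
      mod_cast (card_le_card inter_subset_right).trans (hloc t).1
    rw [lie_lie_sum_eq_sum_inter (fun i hi => (ha i hi).1) (hloc t).2.1]
    calc _ ≤ 4 * ‖∑ i ∈ L ∩ X t, a i‖ ^ 2 * ‖h t‖ := norm_lie_lie_le _ _
      _ ≤ 4 * (k * #(L ∩ X t)) * ‖h t‖ := by
        gcongr
        rw [sq]
        exact mul_le_mul (hB.trans hcard) hB (norm_nonneg _) (Nat.cast_nonneg k)
      _ = 4 * k * (#(L ∩ X t) * ‖h t‖) := by ring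
  calc ‖⁅∑ i ∈ L, a i, ⁅∑ t, h t, ∑ i ∈ L, a i⁆⁆‖
      = ‖∑ t, ⁅∑ i ∈ L, a i, ⁅h t, ∑ i ∈ L, a i⁆⁆‖ := by rw [sum_lie univ h, lie_sum]
    _ ≤ ∑ t, 4 * k * (#(L ∩ X t) * ‖h t‖) := norm_sum_le_of_le _ fun t _ => hterm t
    _ ≤ 4 * k * (g * #L) := by
      rw [← mul_sum]
      gcongr
      exact sum_card_inter_mul_le X _ L fun i _ => hstr i

section GroundState

variable {E : Type*} [NormedAddCommGroup E] [InnerProductSpace ℂ E] {Ω : E}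

lemma re_inner_apply_le_opNorm (T : E →L[ℂ] E) (hΩ : ‖Ω‖ = 1) : (⟪Ω, T Ω⟫_ℂ).re ≤ ‖T‖ :=
  calc (⟪Ω, T Ω⟫_ℂ).re ≤ ‖Ω‖ * ‖T Ω‖ := (Complex.re_le_norm _).trans (norm_inner_le_norm _ _)
    _ ≤ ‖T‖ := by simpa [hΩ] using T.le_opNorm Ω

variable [CompleteSpace E] {H A : E →L[ℂ] E}

lemma IsSelfAdjoint.inner_apply_left (hA : IsSelfAdjoint A) (x y : E) :
    ⟪A x, y⟫_ℂ = ⟪x, A y⟫_ℂ :=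
  hA.isSymmetric x y

lemma IsSelfAdjoint.ofReal_re_inner_apply_self (hA : IsSelfAdjoint A) (x : E) :
    ((⟪x, A x⟫_ℂ).re : ℂ) = ⟪x, A x⟫_ℂ :=
  Complex.conj_eq_iff_re.mp (by rw [inner_conj_symm, hA.inner_apply_left])

lemma inner_sub_expectation_smul_eq_zero (hA : IsSelfAdjoint A) (hΩ : ‖Ω‖ = 1) :
    ⟪Ω, A Ω - ((⟪Ω, A Ω⟫_ℂ).re : ℂ) • Ω⟫_ℂ = 0 := by
  rw [inner_sub_right, inner_smul_right, inner_self_eq_norm_sq_to_K, hΩ,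
    hA.ofReal_re_inner_apply_self]
  simp

lemma norm_sub_expectation_smul_sq (hA : IsSelfAdjoint A) (hΩ : ‖Ω‖ = 1) :
    ‖A Ω - ((⟪Ω, A Ω⟫_ℂ).re : ℂ) • Ω‖ ^ 2 = (⟪Ω, A (A Ω)⟫_ℂ).re - ((⟪Ω, A Ω⟫_ℂ).re) ^ 2 := by
  have hAA : ‖A Ω‖ ^ 2 = (⟪Ω, A (A Ω)⟫_ℂ).re := by
    rw [← hA.inner_apply_left, ← inner_self_eq_norm_sq (𝕜 := ℂ)]; rfl
  rw [norm_sub_sq (𝕜 := ℂ), hAA, norm_smul, hΩ, inner_smul_right, hA.inner_apply_left]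
  simp
  ring

lemma inner_lie_lie_apply_self (hH : IsSelfAdjoint H) (hA : IsSelfAdjoint A) (hHΩ : H Ω = 0) :
    ⟪Ω, ⁅A, ⁅H, A⁆⁆ Ω⟫_ℂ = 2 * ⟪A Ω, H (A Ω)⟫_ℂ := by
  have hΩH : ∀ x, ⟪Ω, H x⟫_ℂ = 0 := fun x => by rw [← hH.inner_apply_left, hHΩ, inner_zero_left]
  simp only [Ring.lie_def, sub_apply, mul_apply_eq_comp, hHΩ, map_zero, sub_zero,
    inner_sub_right, hΩH, hA.inner_apply_left]
  ring

theorem gap_mul_variance_le (hH : IsSelfAdjoint H) (hA : IsSelfAdjoint A) (hΩ : ‖Ω‖ = 1)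
    (hHΩ : H Ω = 0) {δ : ℝ} (hgap : ∀ φ : E, ⟪Ω, φ⟫_ℂ = 0 → δ * ‖φ‖ ^ 2 ≤ (⟪φ, H φ⟫_ℂ).re) :
    δ * ((⟪Ω, A (A Ω)⟫_ℂ).re - ((⟪Ω, A Ω⟫_ℂ).re) ^ 2) ≤ ‖⁅A, ⁅H, A⁆⁆‖ / 2 := by
  set φ := A Ω - ((⟪Ω, A Ω⟫_ℂ).re : ℂ) • Ω
  have henergy : ⟪φ, H φ⟫_ℂ = ⟪A Ω, H (A Ω)⟫_ℂ := by
    simp [φ, hHΩ, ← hH.inner_apply_left Ω]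
  calc δ * ((⟪Ω, A (A Ω)⟫_ℂ).re - ((⟪Ω, A Ω⟫_ℂ).re) ^ 2) = δ * ‖φ‖ ^ 2 := by
        rw [norm_sub_expectation_smul_sq hA hΩ]
    _ ≤ (⟪φ, H φ⟫_ℂ).re := hgap φ (inner_sub_expectation_smul_eq_zero hA hΩ)
    _ = (⟪Ω, ⁅A, ⁅H, A⁆⁆ Ω⟫_ℂ).re / 2 := by
        rw [henergy, inner_lie_lie_apply_self hH hA hHΩ]; simp
    _ ≤ ‖⁅A, ⁅H, A⁆⁆‖ / 2 := by grw [re_inner_apply_le_opNorm _ hΩ]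

end GroundState

lemma IsKLocalHamiltonian.isSelfAdjoint {k : ℕ} {g : ℝ} {H : SpinOp N d}
    (hH : IsKLocalHamiltonian k g H) : IsSelfAdjoint H := by
  obtain ⟨n, X, h, hloc, -, rfl⟩ := hH
  exact isSelfAdjoint_sum (R := SpinOp N d) _ fun t _ => (hloc t).2.2

lemma IsAdditiveOn.isSelfAdjoint {L : Finset (Fin N)} {a : Fin N → SpinOp N d} {A : SpinOp N d}
    (hA : IsAdditiveOn L a A) : IsSelfAdjoint A := by
  obtain ⟨ha, rfl⟩ := hA
  exact isSelfAdjoint_sum (R := SpinOp N d) _ fun i hi => (ha i hi).2.1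

theorem gap_fluctuation_tradeoff_general
    (g : ℝ) (k : ℕ) :
    ∃ C : ℝ, ∀ (N d : ℕ) (H : SpinOp N d) (δE : ℝ),
      IsKLocalHamiltonian k g H → 0 < δE →
      ∀ Ω : SpinSpace N d, IsGappedGround H Ω δE →
      ∀ L : Finset (Fin N), δE ≤ g * L.card →
      ∀ (a : Fin N → SpinOp N d) (A : SpinOp N d), IsAdditiveOn L a A →
        δE * ((inner ℂ Ω (A (A Ω)) : ℂ).re - ((inner ℂ Ω (A Ω) : ℂ).re) ^ 2) ≤
          C * L.card := by
  refine ⟨2 * k * g, fun N d H δE hH _ Ω ⟨hΩ, hHΩ, _, hgap⟩ L _ a A hA => ?_⟩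
  calc _ ≤ ‖⁅A, ⁅H, A⁆⁆‖ / 2 := gap_mul_variance_le hH.isSelfAdjoint hA.isSelfAdjoint hΩ hHΩ hgap
    _ ≤ 4 * k * (g * L.card) / 2 := by grw [hH.norm_lie_lie_le_of_isAdditiveOn hA]
    _ = 2 * k * g * L.card := by ring

theorem gap_fluctuation_tradeoff
    (g : ℝ) (k : ℕ) (hg : 0 < g) (hk : 0 < k) :
    ∃ C : ℝ, ∀ (N d : ℕ) (H : SpinOp N d) (δE : ℝ),
      IsKLocalHamiltonian k g H → 0 < δE →
      ∀ Ω : SpinSpace N d, IsGappedGround H Ω δE →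
      ∀ L : Finset (Fin N), δE ≤ g * L.card →
      ∀ (a : Fin N → SpinOp N d) (A : SpinOp N d), IsAdditiveOn L a A →
        δE * ((inner ℂ Ω (A (A Ω)) : ℂ).re - ((inner ℂ Ω (A Ω) : ℂ).re) ^ 2) ≤
          C * L.card :=
  gap_fluctuation_tradeoff_general g k
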